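/- arXiv:2203.07743 — 2 statements merged into one kernel-verified Lean document; each statement's English description precedes it below -/
import Mathlib

section
/- The quadruple of intervals Ω₀ = [−1, τ−2] × [−1, τ−2], Ω₁ = [τ−2, τ−1] × [−1, τ−2], Ω₂ = [−1, τ−2] × [τ−2, τ−1], Ω₃ = [τ−2, τ−1] × [τ−2, τ−1] satisfies the system of set equations: Ω₀ = σΩ₃ + (σ,σ); Ω₁ = (σΩ₂ + (0,σ)) ∪ (σΩ₃ + (0,σ)); Ω₂ = (σΩ₁ + (σ,0)) ∪ (σΩ₃ + (σ,0)); Ω₃ = σΩ₀ ∪ σΩ₁ ∪ σΩ₂ ∪ σΩ₃, where σ = 1 − τ and σA = {σx : x ∈ A}. -/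
noncomputable def tau : ℝ := (1 + Real.sqrt 5) / 2

noncomputable def sigma : ℝ := 1 - tau

/-- The affine map `x ↦ σ x + v` on `ℝ²`, applied to a set. -/
noncomputable def sctr (v : ℝ × ℝ) (A : Set (ℝ × ℝ)) : Set (ℝ × ℝ) :=
  (fun x : ℝ × ℝ => sigma • x + v) '' A

lemma image_affine_neg {c : ℝ} (hc : c < 0) (d a b : ℝ) :
    (fun x : ℝ => c * x + d) '' Set.Icc a b = Set.Icc (c * b + d) (c * a + d) := by
  ext x
  simp only [Set.mem_image, Set.mem_Icc]
  constructor
  · rintro ⟨y, ⟨h1, h2⟩, rfl⟩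
    constructor <;> nlinarith
  · rintro ⟨h1, h2⟩
    refine ⟨(x - d) / c, ⟨?_, ?_⟩, ?_⟩
    · rw [le_div_iff_of_neg hc]; nlinarith
    · rw [div_le_iff_of_neg hc]; nlinarith
    · have hc' : c ≠ 0 := hc.ne
      field_simp
      ring
lemma sctr_prod (v : ℝ × ℝ) (s t : Set ℝ) :
    sctr v (s ×ˢ t) =
      ((fun x : ℝ => sigma * x + v.1) '' s) ×ˢ ((fun x : ℝ => sigma * x + v.2) '' t) := by
  rw [sctr, Set.prod_image_image_eq]
  rfl

lemma sqrt5_sq : Real.sqrt 5 ^ 2 = 5 := Real.sq_sqrt (by norm_num)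

lemma sqrt5_gt : (2:ℝ) < Real.sqrt 5 := by
  nlinarith [sqrt5_sq, Real.sqrt_nonneg 5]

lemma sqrt5_lt : Real.sqrt 5 < 3 := by
  nlinarith [sqrt5_sq, Real.sqrt_nonneg 5]

lemma sigma_neg : sigma < 0 := by
  unfold sigma tau; nlinarith [sqrt5_gt]

theorem window_IFS_fixed_point :
    let Ω0 : Set (ℝ × ℝ) := Set.Icc (-1) (tau - 2) ×ˢ Set.Icc (-1) (tau - 2)
    let Ω1 : Set (ℝ × ℝ) := Set.Icc (tau - 2) (tau - 1) ×ˢ Set.Icc (-1) (tau - 2)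
    let Ω2 : Set (ℝ × ℝ) := Set.Icc (-1) (tau - 2) ×ˢ Set.Icc (tau - 2) (tau - 1)
    let Ω3 : Set (ℝ × ℝ) := Set.Icc (tau - 2) (tau - 1) ×ˢ Set.Icc (tau - 2) (tau - 1)
    Ω0 = sctr (sigma, sigma) Ω3 ∧
    Ω1 = sctr (0, sigma) Ω2 ∪ sctr (0, sigma) Ω3 ∧
    Ω2 = sctr (sigma, 0) Ω1 ∪ sctr (sigma, 0) Ω3 ∧
    Ω3 = sctr 0 Ω0 ∪ sctr 0 Ω1 ∪ sctr 0 Ω2 ∪ sctr 0 Ω3 := by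
  intro Ω0 Ω1 Ω2 Ω3
  have hτ : tau ^ 2 = tau + 1 := by unfold tau; nlinarith [sqrt5_sq]
  have ht1 : (1:ℝ) ≤ tau := by unfold tau; nlinarith [sqrt5_gt]
  have ht2 : tau ≤ 2 := by unfold tau; nlinarith [sqrt5_lt]
  have e1 : sigma * (tau - 1) + sigma = -1 := by
    unfold sigma; linear_combination -hτ
  have e2 : sigma * (tau - 2) + sigma = tau - 2 := by
    unfold sigma; linear_combination -hτ
  have e3 : sigma * (tau - 2) + 0 = 2 * tau - 3 := by
    unfold sigma; linear_combination -hτ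
  have e4 : sigma * (-1) + 0 = tau - 1 := by unfold sigma; ring
  have e5 : sigma * (tau - 1) + 0 = tau - 2 := by
    unfold sigma; linear_combination -hτ
  have hb1 : tau - 2 ≤ 2 * tau - 3 := by linarith
  have hb2 : 2 * tau - 3 ≤ tau - 1 := by linarith
  have hIcc : Set.Icc (tau - 2) (2 * tau - 3) ∪ Set.Icc (2 * tau - 3) (tau - 1)
      = Set.Icc (tau - 2) (tau - 1) := Set.Icc_union_Icc_eq_Icc hb1 hb2
  simp only [Ω0, Ω1, Ω2, Ω3, sctr_prod, image_affine_neg sigma_neg, Prod.fst_zero,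
    Prod.snd_zero, e1, e2, e3, e4, e5]
  refine ⟨trivial, ?_, ?_, ?_⟩
  · rw [← Set.union_prod, Set.union_comm, hIcc]
  · rw [← Set.prod_union, Set.union_comm, hIcc]
  · rw [← hIcc, Set.union_prod, Set.prod_union, Set.prod_union]
    ext p
    simp only [Set.mem_union]
    tauto
end

section
/- The prototile equations T₀ = τ⁻¹T₃; T₁ = (τ⁻¹T₂ + (1,0)) ∪ τ⁻¹T₃; T₂ = (τ⁻¹T₁ + (0,1)) ∪ τ⁻¹T₃; T₃ = (τ⁻¹T₀ + (1,1)) ∪ (τ⁻¹T₁ + (0,1)) ∪ (τ⁻¹T₂ + (1,0)) ∪ τ⁻¹T₃ are satisfied by the rectangles T₀ = [0,1]², T₁ = [0,τ]×[0,1], T₂ = [0,1]×[0,τ], T₃ = [0,τ]². -/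
/-- The affine map `x ↦ τ⁻¹ x + v` on `ℝ²`, applied to a set. -/
noncomputable def tctr (v : ℝ × ℝ) (A : Set (ℝ × ℝ)) : Set (ℝ × ℝ) :=
  (fun x : ℝ × ℝ => tau⁻¹ • x + v) '' A

open Set

lemma tau_eq_goldenRatio : tau = Real.goldenRatio := rfl

lemma tau_pos : 0 < tau := Real.goldenRatio_pos

lemma one_le_tau : 1 ≤ tau := Real.one_lt_goldenRatio.le

lemma tau_inv_add_one : tau⁻¹ + 1 = tau := by
  rw [tau_eq_goldenRatio, Real.inv_goldenRatio, neg_add_eq_sub, Real.one_sub_goldenRatio]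

lemma tctr_Icc_prod_Icc (v : ℝ × ℝ) (a b c d : ℝ) :
    tctr v (Icc a b ×ˢ Icc c d) =
      Icc (tau⁻¹ * a + v.1) (tau⁻¹ * b + v.1) ×ˢ Icc (tau⁻¹ * c + v.2) (tau⁻¹ * d + v.2) := by
  rw [← image_affine_Icc' (inv_pos.2 tau_pos) v.1, ← image_affine_Icc' (inv_pos.2 tau_pos) v.2,
    prod_image_image_eq, tctr]
  rfl

lemma Icc_prod_Icc_eq_union_of_le {α β : Type*} [LinearOrder α] [LinearOrder β]
    {a b c : α} {a' b' c' : β} (hab : a ≤ b) (hbc : b ≤ c) (hab' : a' ≤ b') (hbc' : b' ≤ c') :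
    Icc a c ×ˢ Icc a' c' =
      Icc b c ×ˢ Icc b' c' ∪ Icc a b ×ˢ Icc b' c' ∪ Icc b c ×ˢ Icc a' b' ∪
        Icc a b ×ˢ Icc a' b' := by
  rw [← Icc_union_Icc_eq_Icc hab hbc, ← Icc_union_Icc_eq_Icc hab' hbc', prod_union, union_prod,
    union_prod]
  ext
  simp only [mem_union]
  tauto

theorem prototile_equations :
    let T0 : Set (ℝ × ℝ) := Set.Icc 0 1 ×ˢ Set.Icc 0 1
    let T1 : Set (ℝ × ℝ) := Set.Icc 0 tau ×ˢ Set.Icc 0 1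
    let T2 : Set (ℝ × ℝ) := Set.Icc 0 1 ×ˢ Set.Icc 0 tau
    let T3 : Set (ℝ × ℝ) := Set.Icc 0 tau ×ˢ Set.Icc 0 tau
    T0 = tctr 0 T3 ∧
    T1 = tctr (1, 0) T2 ∪ tctr 0 T3 ∧
    T2 = tctr (0, 1) T1 ∪ tctr 0 T3 ∧
    T3 = tctr (1, 1) T0 ∪ tctr (0, 1) T1 ∪ tctr (1, 0) T2 ∪ tctr 0 T3 := by
  intro T0 T1 T2 T3
  have hτ : tau⁻¹ * tau = 1 := inv_mul_cancel₀ tau_pos.ne'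
  simp only [T0, T1, T2, T3, tctr_Icc_prod_Icc, Prod.fst_zero, Prod.snd_zero, mul_zero, mul_one,
    add_zero, zero_add, hτ, tau_inv_add_one, true_and]
  refine ⟨?_, ?_, Icc_prod_Icc_eq_union_of_le zero_le_one one_le_tau zero_le_one one_le_tau⟩
  · rw [← union_prod, union_comm, Icc_union_Icc_eq_Icc zero_le_one one_le_tau]
  · rw [← prod_union, union_comm, Icc_union_Icc_eq_Icc zero_le_one one_le_tau]
end
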